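/- arXiv:1212.1298 — 3 statements merged into one kernel-verified Lean document; each statement's English description precedes it below -/
import Mathlib

section
/- Let G be a finite group and H a finite abelian group, and suppose there exists a subgroup-preserving bijection ψ : G → H. Then for every n ≥ 1, G is uniformly abelian group representable for n; in fact, for every choice of subgroups G_1, …, G_n of G, the group H with subgroups ψ(G_1), …, ψ(G_n) represents (G, G_1, …, G_n). -/
/-- `(A, As)` represents `(G, Gs)`: for every nonempty subset `S` of indices,
the index of the intersection of the `Gs i`, `i ∈ S`, in `G` equals the index of the
intersection of the `As i`, `i ∈ S`, in `A`. -/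
def Represents {G A : Type*} [Group G] [Group A] {n : ℕ}
    (Gs : Fin n → Subgroup G) (As : Fin n → Subgroup A) : Prop :=
  ∀ S : Finset (Fin n), S.Nonempty →
    (⨅ i ∈ S, Gs i).index = (⨅ i ∈ S, As i).index

section BijectiveImage

variable {G H : Type*} [Group G] [Group H] {ψ : G → H}

theorem Subgroup.index_eq_of_coe_eq_image [Finite G] (hψ : Function.Bijective ψ)
    {K : Subgroup G} {L : Subgroup H} (hKL : (L : Set H) = ψ '' K) :
    K.index = L.index := by
  have hG : Nat.card G = Nat.card H := Nat.card_eq_of_bijective ψ hψ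
  have hKL_card : Nat.card L = Nat.card K := by
    rw [← SetLike.coe_sort_coe, hKL, Nat.card_image_of_injective hψ.injective]
    rfl
  apply Nat.eq_of_mul_eq_mul_right (Nat.card_pos (α := K))
  rw [Subgroup.index_mul_card, ← hKL_card, Subgroup.index_mul_card, hG]

theorem represents_of_coe_eq_image [Finite G] (hψ : Function.Bijective ψ) {n : ℕ}
    {Gs : Fin n → Subgroup G} {Hs : Fin n → Subgroup H}
    (hGH : ∀ i, (Hs i : Set H) = ψ '' Gs i) : Represents Gs Hs := by
  intro S _
  apply Subgroup.index_eq_of_coe_eq_image hψ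
  simp only [Subgroup.coe_iInf, Set.image_iInter₂ hψ, hGH]

end BijectiveImage

theorem stmt_1_general (G H : Type) [Group G] [Fintype G] [CommGroup H]
    (ψ : G → H) (hbij : Function.Bijective ψ)
    (hsub : ∀ K : Subgroup G, ∃ L : Subgroup H, (L : Set H) = ψ '' (K : Set G))
    (n : ℕ) (Gs : Fin n → Subgroup G) :
    ∃ Hs : Fin n → Subgroup H,
      (∀ i, (Hs i : Set H) = ψ '' (Gs i : Set G)) ∧ Represents Gs Hs := by
  choose Hs hHs using fun i => hsub (Gs i)
  exact ⟨Hs, hHs, represents_of_coe_eq_image hbij hHs⟩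

theorem stmt_1 (G H : Type) [Group G] [Fintype G] [CommGroup H] [Fintype H]
    (ψ : G → H) (hbij : Function.Bijective ψ)
    (hsub : ∀ K : Subgroup G, ∃ L : Subgroup H, (L : Set H) = ψ '' (K : Set G))
    (n : ℕ) (hn : 1 ≤ n) (Gs : Fin n → Subgroup G) :
    ∃ Hs : Fin n → Subgroup H,
      (∀ i, (Hs i : Set H) = ψ '' (Gs i : Set G)) ∧ Represents Gs Hs :=
  stmt_1_general G H ψ hbij hsub n Gs
end

section
/- For every k ≥ 1 and every n ≥ 1, the dihedral group DihedralGroup (2^k) is uniformly abelian group representable for n via the elementary abelian group (Fin (k+1) → ZMod 2): for every choice of subgroups G_1, …, G_n of DihedralGroup (2^k) there exist subgroups A_1, …, A_n of (Fin (k+1) → ZMod 2) such that for every nonempty subset 𝒜 ⊆ {1, …, n}, the index [DihedralGroup (2^k) : ⋂_{i∈𝒜} G_i] equals [(Fin (k+1) → ZMod 2) : ⋂_{i∈𝒜} A_i]. -/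
/-!
Encode `r x` as `(0, digits x)` and `sr x` as `(1, digits x)`, where `digits x ∈ 𝔽₂ᵏ` are the
binary digits of `x ∈ ℤ/2ᵏ`. Every subgroup of `ℤ/2ᵏ` is `{x | 2ᵃ ∣ x}`, and its cosets are the
sets of residues with prescribed `a` lowest binary digits, i.e. cosets of a subspace of `𝔽₂ᵏ`.
A subgroup of the dihedral group is its rotation subgroup together with at most one coset of
reflections, so its image under the encoding is closed under addition in `𝔽₂ᵏ⁺¹`. A bijection
carrying subgroups to subgroups preserves intersections and orders, hence indices.
-/

theorem Nat.mod_two_pow_eq_mod_two_pow_iff {m n a : ℕ} :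
    m % 2 ^ a = n % 2 ^ a ↔ ∀ j < a, m.testBit j = n.testBit j := by
  rw [Nat.eq_iff_testBit_eq]
  refine forall_congr' fun j => ?_
  by_cases hj : j < a <;> simp [Nat.testBit_mod_two_pow, hj]

namespace ZMod

theorem dvd_val_sub_iff {n d : ℕ} [NeZero n] (hd : d ∣ n) (x y : ZMod n) :
    d ∣ (x - y).val ↔ x.val % d = y.val % d := by
  have hcast : ∀ w : ZMod n, castHom hd (ZMod d) w = w.val := fun w => cast_eq_val w
  rw [← natCast_eq_zero_iff, ← natCast_eq_natCast_iff', ← hcast, ← hcast, ← hcast, map_sub,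
    sub_eq_zero]

theorem mul_mem_addSubgroup {n : ℕ} [NeZero n] (R : AddSubgroup (ZMod n)) (c : ZMod n)
    {x : ZMod n} (hx : x ∈ R) : c * x ∈ R := by
  simpa [nsmul_eq_mul] using R.nsmul_mem hx c.val

theorem natCast_mem_of_val_eq_mul_of_coprime {n d u : ℕ} [NeZero n] {R : AddSubgroup (ZMod n)}
    {x : ZMod n} (hx : x ∈ R) (hxdu : x.val = d * u) (hu : u.Coprime n) : (d : ZMod n) ∈ R := by
  have hd : (d : ZMod n) = (u : ZMod n)⁻¹ * x := by
    rw [← natCast_zmod_val x, hxdu, Nat.cast_mul, mul_left_comm, mul_comm _ (u : ZMod n),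
      coe_mul_inv_eq_one u hu, mul_one]
  rw [hd]
  exact mul_mem_addSubgroup R _ hx

theorem exists_mem_iff_two_pow_dvd_val {k : ℕ} (R : AddSubgroup (ZMod (2 ^ k))) :
    ∃ a ≤ k, ∀ x : ZMod (2 ^ k), x ∈ R ↔ 2 ^ a ∣ x.val := by
  classical
  -- `a` is the least exponent with `2 ^ a ∈ R`: if `x = 2 ^ b * u ∈ R` with `u` odd, then `u` is a
  -- unit and so `2 ^ b ∈ R`.
  have hex : ∃ a, ((2 ^ a : ℕ) : ZMod (2 ^ k)) ∈ R := ⟨k, by simp [R.zero_mem]⟩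
  refine ⟨Nat.find hex, Nat.find_min' hex (by simp [R.zero_mem]), fun x => ⟨fun hx => ?_, ?_⟩⟩
  · rcases eq_or_ne x 0 with rfl | hx0
    · simp
    obtain ⟨b, u, hu, hxbu⟩ := Nat.exists_eq_two_pow_mul_odd ((val_ne_zero x).mpr hx0)
    have hb : Nat.find hex ≤ b :=
      Nat.find_min' hex (natCast_mem_of_val_eq_mul_of_coprime hx hxbu
        ((Nat.coprime_two_right.mpr hu).pow_right k))
    exact (pow_dvd_pow 2 hb).trans ⟨u, hxbu⟩
  · rintro ⟨c, hc⟩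
    rw [← natCast_zmod_val x, hc, Nat.cast_mul, mul_comm]
    exact mul_mem_addSubgroup R _ (Nat.find_spec hex)

end ZMod

def binaryDigits (k : ℕ) (x : ZMod (2 ^ k)) : Fin k → ZMod 2 :=
  fun j => ((x.val.testBit j).toNat : ZMod 2)

def lowDigitsVanish (k a : ℕ) : AddSubgroup (Fin k → ZMod 2) :=
  AddSubgroup.pi {j | (j : ℕ) < a} fun _ => ⊥

section binaryDigits

variable {k : ℕ}

@[simp]
theorem binaryDigits_zero : binaryDigits k 0 = 0 := by
  ext j
  simp [binaryDigits]

theorem binaryDigits_sub_mem_lowDigitsVanish_iff {a : ℕ} (ha : a ≤ k) (x y : ZMod (2 ^ k)) :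
    binaryDigits k x - binaryDigits k y ∈ lowDigitsVanish k a ↔
      x.val % 2 ^ a = y.val % 2 ^ a := by
  have hbool : ∀ b c : Bool, ((b.toNat : ZMod 2) = c.toNat) ↔ b = c := by decide
  rw [Nat.mod_two_pow_eq_mod_two_pow_iff, lowDigitsVanish, AddSubgroup.mem_pi]
  simp only [Set.mem_ofPred_eq, Pi.sub_apply, AddSubgroup.mem_bot, sub_eq_zero, binaryDigits,
    hbool]
  exact ⟨fun h j hj => h ⟨j, hj.trans_le ha⟩ hj, fun h j hj => h j hj⟩

theorem binaryDigits_injective : Function.Injective (binaryDigits k) := by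
  intro x y hxy
  have h := (binaryDigits_sub_mem_lowDigitsVanish_iff le_rfl x y).mp
    (by rw [hxy, sub_self]; exact zero_mem _)
  rw [Nat.mod_eq_of_lt (ZMod.val_lt x), Nat.mod_eq_of_lt (ZMod.val_lt y)] at h
  exact ZMod.val_injective _ h

theorem binaryDigits_bijective : Function.Bijective (binaryDigits k) := by
  rw [Fintype.bijective_iff_injective_and_card]
  exact ⟨binaryDigits_injective, by simp⟩

theorem exists_sub_mem_iff_binaryDigits_sub_mem (R : AddSubgroup (ZMod (2 ^ k))) :
    ∃ L : AddSubgroup (Fin k → ZMod 2), ∀ x y,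
      x - y ∈ R ↔ binaryDigits k x - binaryDigits k y ∈ L := by
  obtain ⟨a, hak, hR⟩ := ZMod.exists_mem_iff_two_pow_dvd_val R
  refine ⟨lowDigitsVanish k a, fun x y => ?_⟩
  rw [hR, ZMod.dvd_val_sub_iff (pow_dvd_pow 2 hak), binaryDigits_sub_mem_lowDigitsVanish_iff hak]

end binaryDigits

theorem neg_eq_self_of_module_zmod_two {V : Type*} [AddCommGroup V] [Module (ZMod 2) V] (v : V) :
    -v = v := by
  rw [← neg_one_smul (ZMod 2), show (-1 : ZMod 2) = 1 from rfl, one_smul]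

namespace DihedralGroup

variable {m : ℕ} {V : Type*}

def rotations (H : Subgroup (DihedralGroup m)) : AddSubgroup (ZMod m) where
  carrier := {x | r x ∈ H}
  zero_mem' := by rw [Set.mem_ofPred_eq, r_zero]; exact H.one_mem
  add_mem' hx hy := by simpa [r_mul_r] using H.mul_mem hx hy
  neg_mem' hx := by simpa [inv_r] using H.inv_mem hx

@[simp]
theorem mem_rotations {H : Subgroup (DihedralGroup m)} {x : ZMod m} :
    x ∈ rotations H ↔ r x ∈ H :=
  Iff.rfl

def encode (β : ZMod m → V) : DihedralGroup m → ZMod 2 × V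
  | r x => (0, β x)
  | sr x => (1, β x)

theorem encode_bijective {β : ZMod m → V} (hβ : Function.Bijective β) :
    Function.Bijective (encode β) := by
  refine ⟨?_, ?_⟩
  · rintro (x | x) (y | y) h <;> simp [encode, hβ.injective.eq_iff] at h ⊢ <;> assumption
  · rintro ⟨e, v⟩
    obtain ⟨x, rfl⟩ := hβ.surjective v
    fin_cases e
    exacts [⟨r x, rfl⟩, ⟨sr x, rfl⟩]

theorem exists_addSubgroup_coe_eq_image_encode [AddCommGroup V] [Module (ZMod 2) V]
    {β : ZMod m → V} (hβ0 : β 0 = 0) (hβ : Function.Surjective β)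
    (hcoset : ∀ R : AddSubgroup (ZMod m), ∃ L : AddSubgroup V, ∀ x y,
      x - y ∈ R ↔ β x - β y ∈ L)
    (H : Subgroup (DihedralGroup m)) :
    ∃ K : AddSubgroup (ZMod 2 × V), (K : Set (ZMod 2 × V)) = encode β '' H := by
  obtain ⟨L, hL⟩ := hcoset (rotations H)
  have hr : ∀ x, r x ∈ H ↔ β x ∈ L := fun x => by simpa [hβ0] using hL x 0
  have hsr : ∀ x y, sr x ∈ H → (sr y ∈ H ↔ β y - β x ∈ L) := fun x y hx =>
    calc sr y ∈ H ↔ sr x * r (y - x) ∈ H := by rw [sr_mul_r, add_sub_cancel]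
      _ ↔ r (y - x) ∈ H := H.mul_mem_cancel_left hx
      _ ↔ β y - β x ∈ L := hL y x
  have hadd : ∀ g ∈ H, ∀ h ∈ H, ∃ g' ∈ H, encode β g' = encode β g + encode β h := by
    rintro (x | x) hx (y | y) hy <;> obtain ⟨z, hz⟩ := hβ (β x + β y)
    · refine ⟨r z, (hr z).mpr ?_, by simp [encode, hz]⟩
      rw [hz]
      exact L.add_mem ((hr x).mp hx) ((hr y).mp hy)
    · refine ⟨sr z, (hsr y z hy).mpr ?_, by simp [encode, hz]⟩
      rwa [hz, add_sub_cancel_right, ← hr]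
    · refine ⟨sr z, (hsr x z hx).mpr ?_, by simp [encode, hz]⟩
      rwa [hz, add_sub_cancel_left, ← hr]
    · refine ⟨r z, (hr z).mpr ?_, by simp [encode, hz]; rfl⟩
      rwa [hz, ← neg_eq_self_of_module_zmod_two (β x), ← sub_eq_neg_add, ← hsr x y hx]
  refine ⟨{ carrier := encode β '' H
            zero_mem' := ⟨r 0, by rw [r_zero]; exact H.one_mem, by simp [encode, hβ0]⟩
            add_mem' := ?_
            neg_mem' := fun {v} hv => by rwa [neg_eq_self_of_module_zmod_two v] }, rfl⟩
  rintro _ _ ⟨g, hg, rfl⟩ ⟨h, hh, rfl⟩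
  exact hadd g hg h hh

end DihedralGroup

theorem Subgroup.index_eq_addSubgroup_index_of_coe_eq_image {G A : Type*} [Group G] [Finite G]
    [AddGroup A] {f : G → A} (hf : Function.Bijective f) {H : Subgroup G} {K : AddSubgroup A}
    (hK : (K : Set A) = f '' H) : H.index = K.index := by
  have hcard : Nat.card K = Nat.card H := by
    rw [← SetLike.coe_sort_coe K, hK, Nat.card_image_of_injective hf.injective]
    rfl
  refine Nat.eq_of_mul_eq_mul_right (Nat.card_pos (α := H)) ?_
  rw [H.index_mul_card, ← hcard, K.index_mul_card, Nat.card_eq_of_bijective f hf]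

theorem exists_addSubgroup_family_index_iInf_eq {G A ι : Type*} [Group G] [Finite G] [AddGroup A]
    {f : G → A} (hf : Function.Bijective f)
    (himage : ∀ H : Subgroup G, ∃ K : AddSubgroup A, (K : Set A) = f '' H)
    (Gs : ι → Subgroup G) :
    ∃ As : ι → AddSubgroup A, ∀ S : Set ι, (⨅ i ∈ S, Gs i).index = (⨅ i ∈ S, As i).index := by
  choose As hAs using fun i => himage (Gs i)
  refine ⟨As, fun S => Subgroup.index_eq_addSubgroup_index_of_coe_eq_image hf ?_⟩
  simp only [AddSubgroup.coe_iInf, Subgroup.coe_iInf, hAs]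
  exact (Set.image_iInter₂ hf _).symm

theorem stmt_4_general (k : ℕ) (n : ℕ)
    (Gs : Fin n → Subgroup (DihedralGroup (2 ^ k))) :
    ∃ As : Fin n → AddSubgroup (Fin (k + 1) → ZMod 2),
      ∀ S : Finset (Fin n), S.Nonempty →
        (⨅ i ∈ S, Gs i).index = (⨅ i ∈ S, As i).index := by
  let e := (Fin.consLinearEquiv (ZMod 2) fun _ : Fin (k + 1) => ZMod 2).toAddEquiv
  have himage (H : Subgroup (DihedralGroup (2 ^ k))) : ∃ K : AddSubgroup (Fin (k + 1) → ZMod 2),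
      (K : Set _) = e ∘ DihedralGroup.encode (binaryDigits k) '' H := by
    obtain ⟨K, hK⟩ := DihedralGroup.exists_addSubgroup_coe_eq_image_encode binaryDigits_zero
      binaryDigits_bijective.surjective exists_sub_mem_iff_binaryDigits_sub_mem H
    exact ⟨K.map e.toAddMonoidHom, by rw [AddSubgroup.coe_map, hK, Set.image_comp]; rfl⟩
  obtain ⟨As, hAs⟩ := exists_addSubgroup_family_index_iInf_eq
    (e.bijective.comp (DihedralGroup.encode_bijective binaryDigits_bijective)) himage Gs
  exact ⟨As, fun S _ => hAs S⟩

theorem stmt_4 (k : ℕ) (hk : 1 ≤ k) (n : ℕ) (hn : 1 ≤ n)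
    (Gs : Fin n → Subgroup (DihedralGroup (2 ^ k))) :
    ∃ As : Fin n → AddSubgroup (Fin (k + 1) → ZMod 2),
      ∀ S : Finset (Fin n), S.Nonempty →
        (⨅ i ∈ S, Gs i).index = (⨅ i ∈ S, As i).index :=
  stmt_4_general k n Gs
end

section
/- A finite group G is abelian group representable for n = 2 if and only if G is nilpotent. That is: the following are equivalent for a finite group G: (1) for every pair of subgroups G_1, G_2 of G there exists a finite abelian group A with subgroups A_1, A_2 such that [G : G_1] = [A : A_1], [G : G_2] = [A : A_2], and [G : G_1 ∩ G_2] = [A : A_1 ∩ A_2]; (2) G is nilpotent. -/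
/-!
Both conditions are equivalent to `[G : H ∩ K] ∣ [G : H] [G : K]` for all subgroups `H`, `K`.
For abelian groups this divisibility holds, and conversely any triple `a ∣ c`, `b ∣ c`, `c ∣ a b`
is realised by two coordinate subgroups of `ℤ/(c/b) × ℤ/(c/a) × ℤ/(ab/c)`. In a finite nilpotent
group every Sylow `p`-subgroup `P` is normal and the `p`-part of `[G : H]` is `[P : H ∩ P]`, which is
submultiplicative in `H`. Conversely, applying the divisibility to two Sylow `p`-subgroups `P`, `Q`
makes `[P : P ∩ Q]`, a power of `p`, divide the `p'`-number `[G : Q]`; so `P ≤ Q`, and the Sylow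
`p`-subgroup is unique.
-/

open Subgroup

theorem Subgroup.index_inf_dvd_of_normal {G : Type*} [Group G] (H K : Subgroup G) [K.Normal] :
    (H ⊓ K).index ∣ H.index * K.index := by
  rw [← relIndex_mul_index (inf_le_left : H ⊓ K ≤ H), inf_relIndex_left, mul_comm H.index]
  exact mul_dvd_mul_right (relIndex_dvd_index_of_normal K H) _

theorem exists_commGroup_index_eq_mul (x y z : ℕ) [NeZero x] [NeZero y] [NeZero z] :
    ∃ (A : Type) (_ : CommGroup A) (_ : Fintype A) (A1 A2 : Subgroup A),
      A1.index = x * z ∧ A2.index = y * z ∧ (A1 ⊓ A2).index = x * y * z := by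
  let X := Multiplicative (ZMod x)
  let Y := Multiplicative (ZMod y)
  let Z := Multiplicative (ZMod z)
  let A1 : Subgroup (X × Y × Z) := (⊥ : Subgroup X).prod ((⊤ : Subgroup Y).prod ⊥)
  let A2 : Subgroup (X × Y × Z) := (⊤ : Subgroup X).prod ((⊥ : Subgroup Y).prod ⊥)
  have hinf : A1 ⊓ A2 = ⊥ := by
    ext ⟨a, b, c⟩
    simp only [A1, A2, mem_inf, mem_prod, mem_bot, mem_top, Prod.mk_eq_one]
    tauto
  refine ⟨X × Y × Z, inferInstance, inferInstance, A1, A2, ?_, ?_, ?_⟩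
  · simp [A1, X, Z]
  · simp [A2, Y, Z]
  · rw [hinf, index_bot]
    simp [X, Y, Z, mul_assoc]

theorem exists_commGroup_index_eq_iff {a b c : ℕ} (hac : a ∣ c) (hbc : b ∣ c) (hc : c ≠ 0) :
    (∃ (A : Type) (_ : CommGroup A) (_ : Fintype A) (A1 A2 : Subgroup A),
      a = A1.index ∧ b = A2.index ∧ c = (A1 ⊓ A2).index) ↔ c ∣ a * b := by
  constructor
  · rintro ⟨A, _, _, A1, A2, rfl, rfl, rfl⟩
    exact index_inf_dvd_of_normal A1 A2
  · intro hcab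
    -- write `c = b x`, `a b = c z`, `c = a y`; then `a = x z`, `b = y z`, `c = x y z`
    obtain ⟨x, rfl⟩ := hbc
    obtain ⟨z, hz⟩ := hcab
    obtain ⟨y, hy⟩ := hac
    have hb : b ≠ 0 := left_ne_zero_of_mul hc
    have hx : x ≠ 0 := right_ne_zero_of_mul hc
    have ha : a = x * z := mul_left_cancel₀ hb (by rw [mul_comm, hz, mul_assoc])
    have hb' : b = y * z := mul_right_cancel₀ hx (by rw [hy, ha]; ring)
    subst ha hb'
    have : NeZero x := ⟨hx⟩
    have : NeZero y := ⟨left_ne_zero_of_mul hb⟩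
    have : NeZero z := ⟨right_ne_zero_of_mul hb⟩
    obtain ⟨A, hA, hAfin, A1, A2, h1, h2, h3⟩ := exists_commGroup_index_eq_mul x y z
    refine ⟨A, hA, hAfin, A1, A2, h1.symm, h2.symm, ?_⟩
    rw [h3]
    ring

namespace Sylow

variable {G : Type*} [Group G] [Finite G] {p : ℕ} [Fact p.Prime]

theorem ordProj_index_eq_relIndex (P : Sylow p G) [P.Normal] (H : Subgroup G) :
    ordProj[p] H.index = H.relIndex P := by
  have hsplit : (P : Subgroup G).relIndex H * H.index = H.relIndex P * (P : Subgroup G).index := by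
    rw [← inf_relIndex_left, relIndex_mul_index inf_le_left, ← inf_relIndex_right,
      relIndex_mul_index inf_le_right]
  obtain ⟨n, hn⟩ := P.isPGroup'.index (H.subgroupOf P)
  have hunit : ∀ m : ℕ, ¬ p ∣ m → ordProj[p] m = 1 := fun m hm => by
    rw [Nat.factorization_eq_zero_of_not_dvd hm, pow_zero]
  have hPH : ¬ p ∣ (P : Subgroup G).relIndex H :=
    fun hd => P.not_dvd_index (hd.trans (relIndex_dvd_index_of_normal _ H))
  have hrel : (P : Subgroup G).relIndex H ≠ 0 := index_ne_zero_of_finite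
  have hrel' : H.relIndex P ≠ 0 := index_ne_zero_of_finite
  calc ordProj[p] H.index = ordProj[p] ((P : Subgroup G).relIndex H * H.index) := by
        rw [Nat.ordProj_mul p hrel index_ne_zero_of_finite, hunit _ hPH, one_mul]
    _ = ordProj[p] (H.relIndex P * (P : Subgroup G).index) := by rw [hsplit]
    _ = H.relIndex P := by
        rw [Nat.ordProj_mul p hrel' index_ne_zero_of_finite, hunit _ P.not_dvd_index,
          mul_one, relIndex, hn, Nat.ordProj_self_pow Fact.out]

theorem le_of_index_inf_dvd (P : Sylow p G) {K : Subgroup G} (hK : ¬ p ∣ K.index)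
    (h : (P ⊓ K : Subgroup G).index ∣ (P : Subgroup G).index * K.index) : (P : Subgroup G) ≤ K := by
  rw [← relIndex_mul_index (inf_le_left : (P : Subgroup G) ⊓ K ≤ P), inf_relIndex_left,
    mul_comm (P : Subgroup G).index] at h
  have hdvd : K.relIndex P ∣ K.index :=
    Nat.dvd_of_mul_dvd_mul_right (Nat.pos_of_ne_zero index_ne_zero_of_finite) h
  obtain ⟨n, hn⟩ := P.isPGroup'.index (K.subgroupOf P)
  have hcop : (K.relIndex P).Coprime K.index := by
    rw [relIndex, hn]
    exact Nat.Coprime.pow_left n ((Nat.Prime.coprime_iff_not_dvd Fact.out).mpr hK)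
  exact relIndex_eq_one.mp (hcop.eq_one_of_dvd hdvd)

theorem normal_of_index_inf_dvd
    (h : ∀ H K : Subgroup G, (H ⊓ K).index ∣ H.index * K.index) (P : Sylow p G) : P.Normal := by
  have : Subsingleton (Sylow p G) := ⟨fun P Q => Sylow.ext
    (Q.is_maximal' P.isPGroup' (Q.le_of_index_inf_dvd P.not_dvd_index (h Q P)))⟩
  exact normal_of_subsingleton P

end Sylow

theorem Group.IsNilpotent.index_inf_dvd {G : Type*} [Group G] [Finite G] [Group.IsNilpotent G]
    (H K : Subgroup G) : (H ⊓ K).index ∣ H.index * K.index := by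
  have hH : H.index ≠ 0 := index_ne_zero_of_finite
  have hK : K.index ≠ 0 := index_ne_zero_of_finite
  rw [← Nat.factorization_prime_le_iff_dvd index_ne_zero_of_finite (mul_ne_zero hH hK)]
  intro p hp
  have : Fact p.Prime := ⟨hp⟩
  obtain ⟨P⟩ : Nonempty (Sylow p G) := inferInstance
  rw [← Nat.pow_le_pow_iff_right hp.one_lt, Nat.ordProj_mul p hH hK,
    P.ordProj_index_eq_relIndex, P.ordProj_index_eq_relIndex, P.ordProj_index_eq_relIndex]
  exact relIndex_inf_le

theorem Group.isNilpotent_iff_index_inf_dvd {G : Type*} [Group G] [Finite G] :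
    Group.IsNilpotent G ↔ ∀ H K : Subgroup G, (H ⊓ K).index ∣ H.index * K.index := by
  refine ⟨fun _ => Group.IsNilpotent.index_inf_dvd, fun h => ?_⟩
  refine (isNilpotent_of_finite_tfae.out 3 0).mp ?_
  intro p _ P
  exact P.normal_of_index_inf_dvd h

theorem stmt_18 (G : Type) [Group G] [Fintype G] :
    (∀ G1 G2 : Subgroup G,
      ∃ (A : Type) (_ : CommGroup A) (_ : Fintype A) (A1 A2 : Subgroup A),
        G1.index = A1.index ∧ G2.index = A2.index ∧
          (G1 ⊓ G2).index = (A1 ⊓ A2).index) ↔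
    Group.IsNilpotent G := by
  rw [Group.isNilpotent_iff_index_inf_dvd]
  exact forall₂_congr fun H K => exists_commGroup_index_eq_iff (index_dvd_of_le inf_le_left)
    (index_dvd_of_le inf_le_right) index_ne_zero_of_finite
end
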